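/- arXiv:2410.10258 — 7 statements merged into one kernel-verified Lean document; each statement's English description precedes it below -/
import Mathlib

section
/- Let ε > 0 and let B be a natural number. Suppose X₀, …, X_B are real matrices, each with d columns, and S₀, …, S_B are real matrices, each with d columns, such that ‖XᵢᵀXᵢ − SᵢᵀSᵢ‖₂ ≤ ε/2ⁱ for every i ∈ {0, 1, …, B−1} and X_BᵀX_B = S_BᵀS_B. Let X be the row-stacked matrix of X₀, …, X_B and S the row-stacked matrix of S₀, …, S_B. Then ‖XᵀX − SᵀS‖₂ ≤ 2ε. -/
open Matrix

/-- Spectral norm (ℓ2 operator norm) of a real matrix. -/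
noncomputable def specNorm {m n : ℕ} (M : Matrix (Fin m) (Fin n) ℝ) : ℝ :=
  ‖LinearMap.toContinuousLinearMap (Matrix.toEuclideanLin M)‖

/-- Row-stacking of a family of matrices with a common column index type. -/
def rowStack {d p : ℕ} (n : Fin p → ℕ) (Ms : ∀ i, Matrix (Fin (n i)) (Fin d) ℝ) :
    Matrix ((i : Fin p) × Fin (n i)) (Fin d) ℝ :=
  Matrix.of fun q k => Ms q.1 q.2 k

lemma rowStack_gram {d p : ℕ} (n : Fin p → ℕ) (Ms : ∀ i, Matrix (Fin (n i)) (Fin d) ℝ) :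
    (rowStack n Ms)ᵀ * rowStack n Ms = ∑ i, (Ms i)ᵀ * Ms i := by
  ext k l
  simp only [Matrix.mul_apply, Matrix.sum_apply, rowStack, Matrix.transpose_apply,
    Matrix.of_apply]
  rw [← Finset.univ_sigma_univ, Finset.sum_sigma]

lemma specNorm_sum_le {r c p : ℕ} (f : Fin p → Matrix (Fin r) (Fin c) ℝ) :
    specNorm (∑ i, f i) ≤ ∑ i, specNorm (f i) := by
  simp only [specNorm, map_sum]
  exact norm_sum_le _ _

/-- **Error guarantee of Dyadic Block Sketching.**  If the `i`-th inactive block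
(`i = 0, …, B−1`) incurs covariance spectral error at most `ε / 2ⁱ`, and the final active
block `B` incurs zero error, then the stacked sketch approximates the covariance of the
whole stream with spectral error at most `2ε`. -/
theorem dyadic_block_sketching_error {d B : ℕ} (ε : ℝ) (hε : 0 < ε)
    (n m : Fin (B + 1) → ℕ)
    (Xs : ∀ i, Matrix (Fin (n i)) (Fin d) ℝ)
    (Ss : ∀ i, Matrix (Fin (m i)) (Fin d) ℝ)
    (h : ∀ i : Fin (B + 1), (i : ℕ) < B →
      specNorm ((Xs i)ᵀ * Xs i - (Ss i)ᵀ * Ss i) ≤ ε / 2 ^ (i : ℕ))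
    (hlast : (Xs (Fin.last B))ᵀ * Xs (Fin.last B) = (Ss (Fin.last B))ᵀ * Ss (Fin.last B)) :
    specNorm ((rowStack n Xs)ᵀ * rowStack n Xs - (rowStack m Ss)ᵀ * rowStack m Ss)
      ≤ 2 * ε := by
  have key : (rowStack n Xs)ᵀ * rowStack n Xs - (rowStack m Ss)ᵀ * rowStack m Ss
      = ∑ i, ((Xs i)ᵀ * Xs i - (Ss i)ᵀ * Ss i) := by
    rw [rowStack_gram, rowStack_gram, Finset.sum_sub_distrib]
  rw [key]
  calc specNorm (∑ i, ((Xs i)ᵀ * Xs i - (Ss i)ᵀ * Ss i))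
      ≤ ∑ i, specNorm ((Xs i)ᵀ * Xs i - (Ss i)ᵀ * Ss i) := specNorm_sum_le _
    _ ≤ ∑ i : Fin (B + 1), ε / 2 ^ (i : ℕ) := by
        apply Finset.sum_le_sum
        intro i _
        rcases lt_or_eq_of_le (Nat.lt_succ_iff.mp i.isLt) with hi | hi
        · exact h i hi
        · have : i = Fin.last B := Fin.ext hi
          rw [this, hlast, sub_self]
          have : specNorm (0 : Matrix (Fin d) (Fin d) ℝ) = 0 := by
            simp only [specNorm, map_zero, norm_zero]
          rw [this]
          positivity
    _ = ∑ i ∈ Finset.range (B + 1), ε * (1 / 2 : ℝ) ^ i := by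
        rw [← Fin.sum_univ_eq_sum_range fun i => ε * (1 / 2 : ℝ) ^ i]
        exact Finset.sum_congr rfl fun i _ => by rw [div_pow, one_pow]; ring
    _ = ε * ∑ i ∈ Finset.range (B + 1), (1 / 2 : ℝ) ^ i := by
        rw [Finset.mul_sum]
    _ ≤ ε * 2 := by
        exact mul_le_mul_of_nonneg_left (sum_geometric_two_le _) hε.le
    _ = 2 * ε := mul_comm _ _
end

section
/- Let G be a real symmetric positive semidefinite d×d matrix, x ∈ ℝ^d a vector, and α ≥ 0, σ ≥ 0 real numbers. Let M = G + xxᵀ have spectral decomposition M = Σ_{j=1}^d μⱼ vⱼvⱼᵀ with orthonormal eigenvectors vⱼ and eigenvalues μⱼ ≥ 0, and let M′ = Σ_{j=1}^d max(μⱼ − σ, 0) · vⱼvⱼᵀ be the shrunk matrix. Then M′ + (α + σ)·I_d ⪰ G + α·I_d. -/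
/-!
Write `M = G + xxᵀ = ∑ μⱼ vⱼvⱼᵀ`. The difference to be shown PSD is `(M′ + σ I - M) + xxᵀ`, and
since the orthonormal `vⱼ` resolve the identity, `M′ + σ I - M = ∑ (max (μⱼ - σ) 0 + σ - μⱼ) vⱼvⱼᵀ`
has nonnegative coefficients.
-/

open Matrix

namespace Matrix

variable {n R : Type*} [Fintype n] [DecidableEq n]

theorem sum_vecMulVec_self_eq_one [CommRing R] (v : n → n → R)
    (horth : ∀ i j, v i ⬝ᵥ v j = if i = j then (1 : R) else 0) :
    ∑ j, vecMulVec (v j) (v j) = 1 := by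
  have hrows : of v * (of v)ᵀ = 1 := by
    ext i j
    simpa [mul_apply, one_apply, dotProduct] using horth i j
  calc ∑ j, vecMulVec (v j) (v j) = (of v)ᵀ * of v := by
        ext i k
        simp [mul_apply, sum_apply, vecMulVec_apply]
    _ = 1 := mul_eq_one_comm.mp hrows

theorem posSemidef_sum_max_sub_add_smul_one_sub (v : n → n → ℝ)
    (horth : ∀ i j, v i ⬝ᵥ v j = if i = j then (1 : ℝ) else 0) (μ : n → ℝ) (σ : ℝ) :
    ((∑ j, max (μ j - σ) 0 • vecMulVec (v j) (v j)) + σ • (1 : Matrix n n ℝ)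
      - ∑ j, μ j • vecMulVec (v j) (v j)).PosSemidef := by
  have hsum : (∑ j, max (μ j - σ) 0 • vecMulVec (v j) (v j)) + σ • (1 : Matrix n n ℝ)
      - ∑ j, μ j • vecMulVec (v j) (v j)
      = ∑ j, (max (μ j - σ) 0 + σ - μ j) • vecMulVec (v j) (v j) := by
    simp only [← sum_vecMulVec_self_eq_one v horth, Finset.smul_sum, ← Finset.sum_add_distrib,
      ← Finset.sum_sub_distrib, add_smul, sub_smul]
  rw [hsum]
  refine posSemidef_sum _ fun j _ => ?_
  have hcoeff : 0 ≤ max (μ j - σ) 0 + σ - μ j := by linarith [le_max_left (μ j - σ) 0]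
  simpa using (posSemidef_vecMulVec_self_star (v j)).smul hcoeff

end Matrix

theorem rfd_monotone_general {d : ℕ} (G : Matrix (Fin d) (Fin d) ℝ)
    (x : Fin d → ℝ) (α σ : ℝ)
    (v : Fin d → Fin d → ℝ) (μ : Fin d → ℝ)
    (horth : ∀ i j, v i ⬝ᵥ v j = if i = j then (1 : ℝ) else 0)
    (hdecomp : G + Matrix.vecMulVec x x = ∑ j, μ j • Matrix.vecMulVec (v j) (v j)) :
    ((∑ j, max (μ j - σ) 0 • Matrix.vecMulVec (v j) (v j))
        + (α + σ) • (1 : Matrix (Fin d) (Fin d) ℝ)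
      - (G + α • (1 : Matrix (Fin d) (Fin d) ℝ))).PosSemidef := by
  have hG : G = (∑ j, μ j • vecMulVec (v j) (v j)) - vecMulVec x x := by
    rw [← hdecomp, add_sub_cancel_right]
  have hsplit : (∑ j, max (μ j - σ) 0 • vecMulVec (v j) (v j)) + (α + σ) • (1 : Matrix _ _ ℝ)
        - (G + α • (1 : Matrix _ _ ℝ))
      = ((∑ j, max (μ j - σ) 0 • vecMulVec (v j) (v j)) + σ • (1 : Matrix _ _ ℝ)
          - ∑ j, μ j • vecMulVec (v j) (v j)) + vecMulVec x x := by
    rw [hG, add_smul]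
    abel
  rw [hsplit]
  exact (posSemidef_sum_max_sub_add_smul_one_sub v horth μ σ).add
    (by simpa using posSemidef_vecMulVec_self_star x)

/-- **Positive definite monotonicity of the RFD update step.**  Let `G` be PSD, `x` a new
row, and let `M = G + xxᵀ` have spectral decomposition `∑ⱼ μⱼ vⱼvⱼᵀ`.  If `M′` is the
shrunk matrix `∑ⱼ max (μⱼ − σ) 0 • vⱼvⱼᵀ`, then `M′ + (α + σ)·I ⪰ G + α·I`. -/
theorem rfd_monotone {d : ℕ} (G : Matrix (Fin d) (Fin d) ℝ) (hG : G.PosSemidef)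
    (x : Fin d → ℝ) (α σ : ℝ) (hα : 0 ≤ α) (hσ : 0 ≤ σ)
    (v : Fin d → Fin d → ℝ) (μ : Fin d → ℝ)
    (horth : ∀ i j, v i ⬝ᵥ v j = if i = j then (1 : ℝ) else 0)
    (hμ : ∀ j, 0 ≤ μ j)
    (hdecomp : G + Matrix.vecMulVec x x = ∑ j, μ j • Matrix.vecMulVec (v j) (v j)) :
    ((∑ j, max (μ j - σ) 0 • Matrix.vecMulVec (v j) (v j))
        + (α + σ) • (1 : Matrix (Fin d) (Fin d) ℝ)
      - (G + α • (1 : Matrix (Fin d) (Fin d) ℝ))).PosSemidef :=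
  rfd_monotone_general G x α σ v μ horth hdecomp
end

section
/- Let M be a real symmetric positive semidefinite d×d matrix that is singular (its smallest eigenvalue is 0), and let λ > 0 and α ≥ 0 be real numbers. Then cond(M + (α + λ)·I_d) ≤ cond(M + λ·I_d), where for a positive definite matrix P, cond(P) denotes the ratio of the largest eigenvalue of P to the smallest eigenvalue of P. -/
open Matrix

/-- Condition number of a (positive definite) real matrix: the ratio of its largest
eigenvalue to its smallest eigenvalue, expressed via the real spectrum. -/
noncomputable def matrixCond {d : ℕ} (P : Matrix (Fin d) (Fin d) ℝ) : ℝ :=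
  sSup (spectrum ℝ P) / sInf (spectrum ℝ P)

/- Since M has a zero eigenvalue and is PSD, the spectrum of M + c•I has least element c and
largest element b + c, where b = sSup σ(M) ≥ 0. So cond(M + c•I) = (b + c)/c = 1 + b/c,
which is antitone in c > 0. -/

theorem matrixCond_add_smul_one {d : ℕ} (M : Matrix (Fin d) (Fin d) ℝ)
    (hne : (spectrum ℝ M).Nonempty) (c : ℝ) :
    matrixCond (M + c • (1 : Matrix (Fin d) (Fin d) ℝ))
      = (sSup (spectrum ℝ M) + c) / (sInf (spectrum ℝ M) + c) := by
  have hfin : (spectrum ℝ M).Finite := finite_real_spectrum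
  rw [matrixCond, ← Algebra.algebraMap_eq_smul_one, ← spectrum.add_singleton_eq,
    csSup_add hne hfin.bddAbove (Set.singleton_nonempty c) bddAbove_singleton,
    csInf_add hne hfin.bddBelow (Set.singleton_nonempty c) bddBelow_singleton,
    csSup_singleton, csInf_singleton]

theorem Matrix.PosSemidef.sInf_spectrum_eq_zero {n : Type*} [Fintype n] [DecidableEq n]
    {M : Matrix n n ℝ}
    (hM : M.PosSemidef) (hsing : 0 ∈ spectrum ℝ M) : sInf (spectrum ℝ M) = 0 :=
  IsLeast.csInf_eq ⟨hsing, (posSemidef_iff_isHermitian_and_spectrum_nonneg.mp hM).2⟩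

theorem rfd_well_conditioned_one_general {d : ℕ}
    (M : Matrix (Fin d) (Fin d) ℝ) (hM : M.PosSemidef)
    (hsing : 0 ∈ spectrum ℝ M)
    (lam α : ℝ) (hlam : 0 < lam) (hα : 0 ≤ α) :
    matrixCond (M + (α + lam) • (1 : Matrix (Fin d) (Fin d) ℝ))
      ≤ matrixCond (M + lam • (1 : Matrix (Fin d) (Fin d) ℝ)) := by
  have hb : 0 ≤ sSup (spectrum ℝ M) := le_csSup finite_real_spectrum.bddAbove hsing
  rw [matrixCond_add_smul_one M ⟨0, hsing⟩, matrixCond_add_smul_one M ⟨0, hsing⟩,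
    hM.sInf_spectrum_eq_zero hsing, zero_add, zero_add,
    div_add_same (by positivity), div_add_same hlam.ne']
  gcongr
  linarith

/-- **Well-conditioned property of RFD, part 1.**  If `M` is symmetric PSD and singular
(its smallest eigenvalue is `0`), then for `λ > 0` and `α ≥ 0`,
`matrixCond (M + (α + λ)·I) ≤ matrixCond (M + λ·I)`. -/
theorem rfd_well_conditioned_one {d : ℕ} (hd : 0 < d)
    (M : Matrix (Fin d) (Fin d) ℝ) (hM : M.PosSemidef)
    (hsing : 0 ∈ spectrum ℝ M)
    (lam α : ℝ) (hlam : 0 < lam) (hα : 0 ≤ α) :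
    matrixCond (M + (α + lam) • (1 : Matrix (Fin d) (Fin d) ℝ))
      ≤ matrixCond (M + lam • (1 : Matrix (Fin d) (Fin d) ℝ)) :=
  rfd_well_conditioned_one_general M hM hsing lam α hlam hα
end

section
/- Let G be a real symmetric positive semidefinite d×d matrix whose rank is at most m, where 1 ≤ m ≤ d, and let c > 0. Then det(c·I_d + G) ≤ c^{d−m} · (c + Tr(G)/m)^m. -/
open Matrix Finset

/-!
In an eigenbasis, `det (c • 1 + G) = ∏ (c + λᵢ)` and `Tr G = ∑ λᵢ` with all `λᵢ ≥ 0`, and at most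
`m` of the `λᵢ` are nonzero. Choosing `m` indices that carry all nonzero eigenvalues, the other
`d - m` factors equal `c`, and AM–GM bounds the product of the remaining `m` factors by the
`m`-th power of their mean `c + Tr G / m`.
-/

theorem Real.prod_le_arith_mean_pow {ι : Type*} (s : Finset ι) (z : ι → ℝ)
    (hz : ∀ i ∈ s, 0 ≤ z i) : ∏ i ∈ s, z i ≤ ((∑ i ∈ s, z i) / #s) ^ #s := by
  rcases s.eq_empty_or_nonempty with rfl | hs
  · simp
  have hn : (0 : ℝ) < #s := by exact_mod_cast hs.card_pos
  have hprod : 0 ≤ ∏ i ∈ s, z i := prod_nonneg hz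
  have amgm := Real.geom_mean_le_arith_mean_weighted s (fun _ ↦ (#s : ℝ)⁻¹) z
    (fun _ _ ↦ by positivity) (by simp [hn.ne']) hz
  rw [Real.finsetProd_rpow s z hz, ← mul_sum, inv_mul_eq_div] at amgm
  calc ∏ i ∈ s, z i = ((∏ i ∈ s, z i) ^ (#s : ℝ)⁻¹) ^ #s := by
        rw [← Real.rpow_natCast, ← Real.rpow_mul hprod, inv_mul_cancel₀ hn.ne', Real.rpow_one]
    _ ≤ ((∑ i ∈ s, z i) / #s) ^ #s := by gcongr

-- Evaluate `charpoly A = ∏ (X - λᵢ)` at `-c`.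
theorem Matrix.IsHermitian.det_smul_one_add {𝕜 n : Type*} [RCLike 𝕜] [Fintype n] [DecidableEq n]
    {A : Matrix n n 𝕜} (hA : A.IsHermitian) (c : 𝕜) :
    (c • 1 + A).det = ∏ i, (c + hA.eigenvalues i) := by
  have h := A.eval_charpoly (-c)
  rw [hA.charpoly_eq, Polynomial.eval_prod] at h
  have hneg : scalar n (-c) - A = -(c • 1 + A) := by
    rw [neg_add, scalar_apply, ← smul_one_eq_diagonal, neg_smul, sub_eq_add_neg]
  rw [hneg, det_neg] at h
  simp only [Polynomial.eval_sub, Polynomial.eval_X, Polynomial.eval_C] at h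
  have hprod : ∏ i, (-c - (hA.eigenvalues i : 𝕜)) =
      (-1) ^ Fintype.card n * ∏ i, (c + hA.eigenvalues i) := by
    rw [← Finset.card_univ, ← prod_const, ← prod_mul_distrib]
    congr 1; ext i; ring
  rw [hprod] at h
  exact (mul_left_cancel₀ (pow_ne_zero _ (neg_ne_zero.mpr one_ne_zero)) h).symm

theorem prod_add_le_of_card_support_le {ι : Type*} [Fintype ι] (f : ι → ℝ) (hf : 0 ≤ f) {m : ℕ}
    (hsupp : #{i | f i ≠ 0} ≤ m) (hm : m ≤ Fintype.card ι) {c : ℝ} (hc : 0 ≤ c) :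
    ∏ i, (c + f i) ≤ c ^ (Fintype.card ι - m) * (c + (∑ i, f i) / m) ^ m := by
  classical
  obtain ⟨S, hsuppS, -, hS⟩ :=
    exists_subsuperset_card_eq (subset_univ {i | f i ≠ 0}) hsupp (by simpa using hm)
  have hzero : ∀ i ∉ S, f i = 0 := fun i hi ↦ by
    by_contra h
    exact hi (hsuppS (by simpa using h))
  have hsum : ∑ i ∈ S, f i = ∑ i, f i :=
    sum_subset (subset_univ S) fun i _ hi ↦ hzero i hi
  have hmean : ((∑ i ∈ S, (c + f i)) / m) ^ m = (c + (∑ i, f i) / m) ^ m := by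
    rcases Nat.eq_zero_or_pos m with rfl | hm0
    · simp
    rw [sum_add_distrib, sum_const, hS, hsum, nsmul_eq_mul, add_div, mul_div_cancel_left₀]
    exact_mod_cast hm0.ne'
  calc ∏ i, (c + f i) = c ^ (Fintype.card ι - m) * ∏ i ∈ S, (c + f i) := by
        rw [← prod_compl_mul_prod S,
          prod_congr rfl fun i hi ↦ by rw [hzero i (mem_compl.mp hi), add_zero],
          prod_const, card_compl, hS]
    _ ≤ c ^ (Fintype.card ι - m) * (c + (∑ i, f i) / m) ^ m := by
        rw [← hmean, ← hS]
        gcongr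
        exact Real.prod_le_arith_mean_pow S _ fun i _ ↦ add_nonneg hc (hf i)

theorem det_le_of_rank_le_general {d m : ℕ} (hmd : m ≤ d)
    (G : Matrix (Fin d) (Fin d) ℝ) (hG : G.PosSemidef) (hrank : G.rank ≤ m)
    (c : ℝ) (hc : 0 < c) :
    (c • (1 : Matrix (Fin d) (Fin d) ℝ) + G).det
      ≤ c ^ (d - m) * (c + G.trace / m) ^ m := by
  have hA := hG.isHermitian
  have hsupp : #{i | hA.eigenvalues i ≠ 0} ≤ m := by
    rwa [hA.rank_eq_card_non_zero_eigs, Fintype.card_subtype] at hrank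
  have hbound := prod_add_le_of_card_support_le hA.eigenvalues hG.eigenvalues_nonneg hsupp
    (by simpa using hmd) hc.le
  rw [Fintype.card_fin] at hbound
  simpa [hA.det_smul_one_add, hA.trace_eq_sum_eigenvalues] using hbound

/-- **Determinant–trace inequality for low-rank PSD matrices.**  If `G` is a real
symmetric PSD `d×d` matrix of rank at most `m` (with `1 ≤ m ≤ d`) and `c > 0`, then
`det (c·I + G) ≤ c^(d−m) · (c + Tr G / m)^m`. -/
theorem det_le_of_rank_le {d m : ℕ} (hm1 : 1 ≤ m) (hmd : m ≤ d)
    (G : Matrix (Fin d) (Fin d) ℝ) (hG : G.PosSemidef) (hrank : G.rank ≤ m)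
    (c : ℝ) (hc : 0 < c) :
    (c • (1 : Matrix (Fin d) (Fin d) ℝ) + G).det
      ≤ c ^ (d - m) * (c + G.trace / m) ^ m :=
  det_le_of_rank_le_general hmd G hG hrank c hc
end

section
/- Let λ > 0, L > 0, let x₁, …, x_t ∈ ℝ^d satisfy ‖x_s‖₂ ≤ L for all s, and set A = λ·I_d + Σ_{s=1}^t x_s x_sᵀ. Let G be a real symmetric positive semidefinite d×d matrix and Δ ≥ 0 a real number such that (i) rank(G) ≤ 2l for an integer l with 1 ≤ 2l ≤ d, (ii) Σ_{s=1}^t x_s x_sᵀ ⪯ G + Δ·I_d, and (iii) Tr(G) ≤ t·L². Then ln( det(A) / λ^d ) ≤ d·ln(1 + Δ/λ) + 2l·ln(1 + t·L² / (2l·λ)). -/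
/-!
Determinant monotonicity in the Loewner order turns `∑ₛ xₛxₛᵀ ⪯ G + Δ·I` into
`det A ≤ det ((λ + Δ)·I + G) = ∏ᵢ (λ + Δ + μᵢ)`, where `μᵢ ≥ 0` are the eigenvalues of `G`.
Since `1 + (a + b) ≤ (1 + a)(1 + b)` for `a, b ≥ 0`, each factor contributes at most
`log (1 + Δ/λ) + log (1 + μᵢ/λ)`. At most `2l` of the `μᵢ` are nonzero, so by concavity of `log`
the second parts sum to at most `2l · log (1 + Tr G / (2lλ))`.
-/

open Matrix Real

namespace Matrix

variable {n : Type*} [Fintype n] [DecidableEq n]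

lemma IsHermitian.det_smul_one_add_s7 {C : Matrix n n ℝ} (hC : C.IsHermitian) (c : ℝ) :
    (c • 1 + C).det = ∏ i, (c + hC.eigenvalues i) := by
  have hcfc : c • 1 + C = cfc (fun x => c + x) C := by
    rw [cfc_add .., cfc_const c C, cfc_id' ℝ C, Algebra.algebraMap_eq_smul_one]
  rw [hcfc, hC.cfc_eq]
  simp [IsHermitian.cfc, -Unitary.conjStarAlgAut_apply]

lemma PosSemidef.one_le_det_one_add {M : Matrix n n ℝ} (hM : M.PosSemidef) :
    1 ≤ (1 + M).det := by
  rw [← one_smul ℝ (1 : Matrix n n ℝ), hM.1.det_smul_one_add_s7]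
  exact Finset.one_le_prod fun i _ => le_add_of_nonneg_right (hM.eigenvalues_nonneg i)

open scoped MatrixOrder in
lemma PosDef.det_le_det_add {A P : Matrix n n ℝ} (hA : A.PosDef) (hP : P.PosSemidef) :
    A.det ≤ (A + P).det := by
  set R := CFC.sqrt P
  have hR : R.IsHermitian := (CFC.sqrt_nonneg P).posSemidef.1
  have hfactor : A + P = A * (1 + A⁻¹ * R * R) := by
    rw [Matrix.mul_add, Matrix.mul_one, Matrix.mul_assoc,
      Matrix.mul_nonsing_inv_cancel_left _ _ ((isUnit_iff_isUnit_det A).mp hA.isUnit),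
      CFC.sqrt_mul_sqrt_self P hP.nonneg]
  -- Sylvester's identity moves the factor `R` around: `det (1 + A⁻¹ R R) = det (1 + R A⁻¹ R)`.
  have hone : 1 ≤ (1 + A⁻¹ * R * R).det := by
    rw [det_one_add_mul_comm, ← Matrix.mul_assoc]
    have hRAR := hA.inv.posSemidef.mul_mul_conjTranspose_same R
    rw [hR.eq] at hRAR
    exact hRAR.one_le_det_one_add
  rw [hfactor, det_mul]
  exact le_mul_of_one_le_right hA.det_pos.le hone

lemma IsHermitian.exists_card_eq_eigenvalues_eq_zero_of_notMem {C : Matrix n n ℝ}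
    (hC : C.IsHermitian) {r : ℕ} (hrank : C.rank ≤ r) (hr : r ≤ Fintype.card n) :
    ∃ T : Finset n, T.card = r ∧ ∀ i ∉ T, hC.eigenvalues i = 0 := by
  have hsupp : (Finset.univ.filter fun i => hC.eigenvalues i ≠ 0).card ≤ r := by
    rwa [hC.rank_eq_card_non_zero_eigs, Fintype.card_subtype] at hrank
  obtain ⟨T, hsub, hT⟩ := Finset.exists_superset_card_eq hsupp hr
  refine ⟨T, hT, fun i hi => ?_⟩
  by_contra h
  exact hi (hsub (by simpa using h))

end Matrix

namespace Real

lemma log_one_add_add_le {a b : ℝ} (ha : 0 ≤ a) (hb : 0 ≤ b) :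
    log (1 + (a + b)) ≤ log (1 + a) + log (1 + b) := by
  rw [← log_mul (by positivity) (by positivity)]
  exact log_le_log (by positivity) (by nlinarith [mul_nonneg ha hb])

lemma sum_log_one_add_le {ι : Type*} (s : Finset ι) {a : ι → ℝ} (ha : ∀ i ∈ s, 0 ≤ a i) :
    ∑ i ∈ s, log (1 + a i) ≤ s.card * log (1 + (∑ i ∈ s, a i) / s.card) := by
  rcases s.eq_empty_or_nonempty with rfl | hs
  · simp
  have hcard : (0 : ℝ) < s.card := by exact_mod_cast hs.card_pos
  have hjensen := strictConcaveOn_log_Ioi.concaveOn.le_map_sum (t := s)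
    (w := fun _ => (s.card : ℝ)⁻¹) (p := fun i => 1 + a i) (fun _ _ => by positivity)
    (by simp [hcard.ne']) (fun i hi => by simp only [Set.mem_Ioi]; linarith [ha i hi])
  have hmean : ∑ i ∈ s, (s.card : ℝ)⁻¹ • (1 + a i) = 1 + (∑ i ∈ s, a i) / s.card := by
    simp only [smul_eq_mul, ← Finset.mul_sum, Finset.sum_add_distrib, Finset.sum_const,
      nsmul_eq_mul, mul_one]
    field_simp
  rw [hmean, ← Finset.smul_sum, smul_eq_mul] at hjensen
  rwa [inv_mul_le_iff₀ hcard] at hjensen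

end Real

theorem det_trace_inequality_general {d t l : ℕ} (hld : 2 * l ≤ d)
    (lam L : ℝ) (hlam : 0 < lam)
    (x : Fin t → Fin d → ℝ)
    (G : Matrix (Fin d) (Fin d) ℝ) (hG : G.PosSemidef)
    (Δ : ℝ) (hΔ : 0 ≤ Δ)
    (hrank : G.rank ≤ 2 * l)
    (hdom : (G + Δ • (1 : Matrix (Fin d) (Fin d) ℝ)
      - ∑ s, Matrix.vecMulVec (x s) (x s)).PosSemidef)
    (htr : G.trace ≤ t * L ^ 2) :
    Real.log
        ((lam • (1 : Matrix (Fin d) (Fin d) ℝ) + ∑ s, Matrix.vecMulVec (x s) (x s)).det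
          / lam ^ d)
      ≤ d * Real.log (1 + Δ / lam)
        + 2 * l * Real.log (1 + t * L ^ 2 / (2 * l * lam)) := by
  set S := ∑ s, vecMulVec (x s) (x s)
  set μ := hG.1.eigenvalues
  have hμ : ∀ i, 0 ≤ μ i := hG.eigenvalues_nonneg
  have hA : (lam • 1 + S).PosDef :=
    (PosDef.one.smul hlam).add_posSemidef
      (posSemidef_sum _ fun s _ => by simpa using posSemidef_vecMulVec_self_star (x s))
  have hdet : (lam • 1 + S).det ≤ ((lam + Δ) • 1 + G).det := by
    have hsum : lam • 1 + S + (G + Δ • 1 - S) = (lam + Δ) • 1 + G := by rw [add_smul]; abel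
    exact hsum ▸ hA.det_le_det_add hdom
  obtain ⟨T, hTcard, hT⟩ :=
    hG.1.exists_card_eq_eigenvalues_eq_zero_of_notMem hrank (by simpa using hld)
  have hμT : ∑ i ∈ T, μ i ≤ t * L ^ 2 := calc
    ∑ i ∈ T, μ i ≤ ∑ i, μ i := Finset.sum_le_univ_sum_of_nonneg hμ
    _ = G.trace := by simp [μ, hG.1.trace_eq_sum_eigenvalues]
    _ ≤ t * L ^ 2 := htr
  calc log ((lam • 1 + S).det / lam ^ d)
      ≤ log (((lam + Δ) • 1 + G).det / lam ^ d) := by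
        gcongr
        exact div_pos hA.det_pos (by positivity)
    _ = ∑ i, log (1 + (Δ / lam + μ i / lam)) := by
      rw [hG.1.det_smul_one_add_s7, show lam ^ d = ∏ _i : Fin d, lam by simp,
        ← Finset.prod_div_distrib, log_prod fun i _ => by have := hμ i; positivity]
      refine Finset.sum_congr rfl fun i _ => congrArg log ?_
      field_simp
      ring
    _ ≤ ∑ i, (log (1 + Δ / lam) + log (1 + μ i / lam)) :=
      Finset.sum_le_sum fun i _ => log_one_add_add_le (by positivity) (div_nonneg (hμ i) hlam.le)
    _ = d * log (1 + Δ / lam) + ∑ i ∈ T, log (1 + μ i / lam) := by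
      rw [Finset.sum_add_distrib,
        Finset.sum_subset (Finset.subset_univ T) fun i _ hi => by simp [μ, hT i hi]]
      simp
    _ ≤ d * log (1 + Δ / lam) + 2 * l * log (1 + (∑ i ∈ T, μ i / lam) / (2 * l)) := by
      gcongr
      simpa [hTcard] using sum_log_one_add_le T fun i _ => div_nonneg (hμ i) hlam.le
    _ ≤ d * log (1 + Δ / lam) + 2 * l * log (1 + t * L ^ 2 / (2 * l * lam)) := by
      rw [← Finset.sum_div, div_div, mul_comm lam]
      have hμT_nonneg := Finset.sum_nonneg fun i (_ : i ∈ T) => hμ i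
      gcongr

/-- **Multi-scale sketch-based determinant–trace inequality.**  Let
`A = λ·I + ∑ₛ xₛxₛᵀ` with `‖xₛ‖₂ ≤ L`, and let `G` be a symmetric PSD matrix of rank at
most `2l` with `∑ₛ xₛxₛᵀ ⪯ G + Δ·I` and `Tr G ≤ t·L²`.  Then
`ln (det A / λ^d) ≤ d·ln (1 + Δ/λ) + 2l·ln (1 + t·L²/(2l·λ))`. -/
theorem det_trace_inequality {d t l : ℕ} (hl : 1 ≤ l) (hld : 2 * l ≤ d)
    (lam L : ℝ) (hlam : 0 < lam) (hL : 0 < L)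
    (x : Fin t → Fin d → ℝ) (hx : ∀ s, Real.sqrt (x s ⬝ᵥ x s) ≤ L)
    (G : Matrix (Fin d) (Fin d) ℝ) (hG : G.PosSemidef)
    (Δ : ℝ) (hΔ : 0 ≤ Δ)
    (hrank : G.rank ≤ 2 * l)
    (hdom : (G + Δ • (1 : Matrix (Fin d) (Fin d) ℝ)
      - ∑ s, Matrix.vecMulVec (x s) (x s)).PosSemidef)
    (htr : G.trace ≤ t * L ^ 2) :
    Real.log
        ((lam • (1 : Matrix (Fin d) (Fin d) ℝ) + ∑ s, Matrix.vecMulVec (x s) (x s)).det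
          / lam ^ d)
      ≤ d * Real.log (1 + Δ / lam)
        + 2 * l * Real.log (1 + t * L ^ 2 / (2 * l * lam)) :=
  det_trace_inequality_general hld lam L hlam x G hG Δ hΔ hrank hdom htr
end

section
/- Let be a real symmetric positive definite d×d matrix, β ≥ 0 a real number, and x⋆, x, θ⋆, θ̃, θ̂ ∈ ℝ^d vectors such that xᵀθ̂ ≥ (x⋆)ᵀθ⋆, ‖θ̂ − θ̃‖_Â ≤ β, and ‖θ̃ − θ⋆‖_Â ≤ β. Then (x⋆ − x)ᵀθ⋆ ≤ 2β · √(xᵀÂ⁻¹x). -/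
/-!
Optimism gives `x⋆ ⬝ θ⋆ ≤ x ⬝ θ̂`, so the regret `(x⋆ - x) ⬝ θ⋆` is at most
`x ⬝ (θ̂ - θ̃) + x ⬝ (θ̃ - θ⋆)`. Cauchy–Schwarz for the inner product `⟪u, w⟫ = u ⬝ Â w`,
applied to `Â⁻¹ x` and `v`, gives `x ⬝ v ≤ ‖x‖_{Â⁻¹} ‖v‖_Â`, and both confidence radii
are at most `β`.
-/

open Matrix

namespace Matrix

theorem IsHermitian.dotProduct_mulVec_comm {n R : Type*} [Fintype n] [CommSemiring R]
    [StarRing R] [TrivialStar R] {A : Matrix n n R} (hA : A.IsHermitian) (u w : n → R) :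
    u ⬝ᵥ A *ᵥ w = w ⬝ᵥ A *ᵥ u := by
  rw [dotProduct_mulVec, ← mulVec_transpose, dotProduct_comm,
    ← conjTranspose_eq_transpose_of_trivial, hA.eq]

theorem PosSemidef.dotProduct_mulVec_sq_le {n R : Type*} [Fintype n] [DecidableEq n]
    [CommRing R] [LinearOrder R] [IsStrictOrderedRing R] [StarRing R] [TrivialStar R]
    {A : Matrix n n R} (hA : A.PosSemidef) (u w : n → R) :
    (u ⬝ᵥ A *ᵥ w) ^ 2 ≤ (u ⬝ᵥ A *ᵥ u) * (w ⬝ᵥ A *ᵥ w) := by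
  have h := (toBilin' A).apply_mul_apply_le_of_forall_zero_le
    (fun v ↦ by simpa [toBilin'_apply'] using hA.dotProduct_mulVec_nonneg v) u w
  simp only [toBilin'_apply'] at h
  rwa [hA.isHermitian.dotProduct_mulVec_comm w u, ← sq] at h

theorem PosDef.dotProduct_le_sqrt_mul_sqrt {n : Type*} [Fintype n] [DecidableEq n]
    {A : Matrix n n ℝ} (hA : A.PosDef) (x v : n → ℝ) :
    x ⬝ᵥ v ≤ √(x ⬝ᵥ A⁻¹ *ᵥ x) * √(v ⬝ᵥ A *ᵥ v) := by
  set u := A⁻¹ *ᵥ x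
  have hAu : A *ᵥ u = x := by
    rw [mulVec_mulVec, mul_nonsing_inv A ((isUnit_iff_isUnit_det A).mp hA.isUnit), one_mulVec]
  have hcs := hA.posSemidef.dotProduct_mulVec_sq_le u v
  rw [hA.isHermitian.dotProduct_mulVec_comm u v, hAu, dotProduct_comm v x,
    dotProduct_comm u x] at hcs
  rw [← Real.sqrt_mul (by simpa using hA.inv.posSemidef.dotProduct_mulVec_nonneg x)]
  exact Real.le_sqrt_of_sq_le hcs

end Matrix

theorem instantaneous_regret_general {d : ℕ} (Ahat : Matrix (Fin d) (Fin d) ℝ)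
    (hA : Ahat.PosDef) (β : ℝ)
    (xstar x θstar θtilde θhat : Fin d → ℝ)
    (hopt : x ⬝ᵥ θhat ≥ xstar ⬝ᵥ θstar)
    (h1 : Real.sqrt ((θhat - θtilde) ⬝ᵥ (Ahat *ᵥ (θhat - θtilde))) ≤ β)
    (h2 : Real.sqrt ((θtilde - θstar) ⬝ᵥ (Ahat *ᵥ (θtilde - θstar))) ≤ β) :
    (xstar - x) ⬝ᵥ θstar ≤ 2 * β * Real.sqrt (x ⬝ᵥ (Ahat⁻¹ *ᵥ x)) := by
  set s := √(x ⬝ᵥ Ahat⁻¹ *ᵥ x)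
  have hs : 0 ≤ s := Real.sqrt_nonneg _
  have hest : x ⬝ᵥ (θhat - θtilde) ≤ s * β :=
    (hA.dotProduct_le_sqrt_mul_sqrt x _).trans (mul_le_mul_of_nonneg_left h1 hs)
  have hconf : x ⬝ᵥ (θtilde - θstar) ≤ s * β :=
    (hA.dotProduct_le_sqrt_mul_sqrt x _).trans (mul_le_mul_of_nonneg_left h2 hs)
  rw [dotProduct_sub] at hest hconf
  rw [sub_dotProduct]
  linarith

/-- **Instantaneous regret bound for optimistic linear bandits.**  If `Â` is symmetric
positive definite, the optimistic value satisfies `xᵀθ̂ ≥ (x⋆)ᵀθ⋆`, and both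
`‖θ̂ − θ̃‖_Â ≤ β` and `‖θ̃ − θ⋆‖_Â ≤ β`, then
`(x⋆ − x)ᵀθ⋆ ≤ 2β·√(xᵀÂ⁻¹x)`. -/
theorem instantaneous_regret {d : ℕ} (Ahat : Matrix (Fin d) (Fin d) ℝ)
    (hA : Ahat.PosDef) (β : ℝ) (hβ : 0 ≤ β)
    (xstar x θstar θtilde θhat : Fin d → ℝ)
    (hopt : x ⬝ᵥ θhat ≥ xstar ⬝ᵥ θstar)
    (h1 : Real.sqrt ((θhat - θtilde) ⬝ᵥ (Ahat *ᵥ (θhat - θtilde))) ≤ β)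
    (h2 : Real.sqrt ((θtilde - θstar) ⬝ᵥ (Ahat *ᵥ (θtilde - θstar))) ≤ β) :
    (xstar - x) ⬝ᵥ θstar ≤ 2 * β * Real.sqrt (x ⬝ᵥ (Ahat⁻¹ *ᵥ x)) :=
  instantaneous_regret_general Ahat hA β xstar x θstar θtilde θhat hopt h1 h2
end

section
/- Let r ≥ 1 and t ≥ 1 be natural numbers, let p be a probability mass function on a finite set of r items with minimum probability p_min = min_i p_i, and let X₁, …, X_t be independent random variables each distributed according to p. Let l be an integer with 2 ≤ l ≤ r. Then the probability that fewer than l − 1 distinct items appear among X₁, …, X_t is at most Σ_i (1 − p_i)^t / (r − l + 2), and hence at most r·(1 − p_min)^t / 2. -/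
/-!
An outcome with fewer than `l - 1` distinct items misses at least `r - l + 2` of the `r` items.
Markov's inequality for the number of missed items, whose expectation is `∑ᵢ (1 - pᵢ)^t` by
independence, gives the first bound; `pᵢ ≥ p_min` and `r - l + 2 ≥ 2` give the second.
-/

open MeasureTheory ProbabilityTheory Finset

section

variable {Ω : Type*} [MeasurableSpace Ω] {μ : Measure Ω}

open Classical in
theorem mul_measureReal_le_sum_of_le_card_mem [IsFiniteMeasure μ] {α : Type*} [Fintype α]
    {A : α → Set Ω} (hA : ∀ i, MeasurableSet (A i)) {E : Set Ω} {k : ℕ}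
    (hk : ∀ ω ∈ E, k ≤ #{i | ω ∈ A i}) :
    k * μ.real E ≤ ∑ i, μ.real (A i) := by
  set N : Ω → ℝ := fun ω => ∑ i, (A i).indicator 1 ω
  have hN_card : ∀ ω, N ω = #{i | ω ∈ A i} := fun ω => by
    simp only [N, Set.indicator_apply, Pi.one_apply, sum_boole]
  have hN_int : Integrable N μ :=
    integrable_finsetSum _ fun i _ => (integrable_const 1).indicator (hA i)
  calc (k : ℝ) * μ.real E ≤ k * μ.real {ω | (k : ℝ) ≤ N ω} := by
        gcongr
        · finiteness
        · intro ω hω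
          simpa [hN_card] using hk ω hω
    _ ≤ ∫ ω, N ω ∂μ :=
        mul_meas_ge_le_integral_of_nonneg (ae_of_all _ fun ω => by simp [hN_card]) hN_int _
    _ = ∑ i, μ.real (A i) := by
        rw [integral_finsetSum _ fun i _ => (integrable_const 1).indicator (hA i)]
        exact sum_congr rfl fun i _ => integral_indicator_one (hA i)

theorem ProbabilityTheory.iIndepFun.measureReal_forall_mem {ι β : Type*} [Fintype ι]
    [MeasurableSpace β] {X : ι → Ω → β} (hindep : iIndepFun X μ) (hmeas : ∀ s, Measurable (X s))
    {p : Measure β} (hlaw : ∀ s, μ.map (X s) = p) {S : Set β} (hS : MeasurableSet S) :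
    μ.real {ω | ∀ s, X s ω ∈ S} = p.real S ^ Fintype.card ι := by
  have hiInter : {ω | ∀ s, X s ω ∈ S} = ⋂ s ∈ (univ : Finset ι), X s ⁻¹' S := by
    ext ω; simp
  have hlaw_real : ∀ s, μ.real (X s ⁻¹' S) = p.real S := fun s => by
    rw [← map_measureReal_apply (hmeas s) hS, hlaw s]
  rw [hiInter, measureReal_def,
    iIndepFun_iff_measure_inter_preimage_eq_mul.mp hindep univ fun s _ => hS,
    ENNReal.toReal_prod]
  simp only [← measureReal_def, hlaw_real, prod_const, card_univ]

end

theorem Finset.card_filter_forall_ne {ι α : Type*} [Fintype ι] [Fintype α] [DecidableEq α]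
    (f : ι → α) : #{a | ∀ s, f s ≠ a} = Fintype.card α - #(univ.image f) := by
  rw [← card_compl]
  congr 1
  ext a
  simp [eq_comm]

theorem sum_one_sub_pow_le_card_mul_one_sub_iInf_pow {ι : Type*} [Fintype ι] (a : ι → ℝ)
    (ha : ∀ i, a i ≤ 1) (t : ℕ) :
    ∑ i, (1 - a i) ^ t ≤ Fintype.card ι * (1 - ⨅ i, a i) ^ t := by
  rw [← nsmul_eq_mul, ← card_univ]
  refine sum_le_card_nsmul _ _ _ fun i _ => ?_
  have hinf : ⨅ i, a i ≤ a i := ciInf_le (Set.finite_range a).bddBelow i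
  exact pow_le_pow_left₀ (by linarith [ha i]) (by linarith) t

theorem few_distinct_items_prob_general {r t : ℕ}
    {Ω : Type*} [MeasurableSpace Ω] (μ : Measure Ω) [IsProbabilityMeasure μ]
    (p : Measure (Fin r)) [IsProbabilityMeasure p]
    (X : Fin t → Ω → Fin r) (hmeas : ∀ s, Measurable (X s))
    (hindep : iIndepFun X μ)
    (hlaw : ∀ s, Measure.map (X s) μ = p)
    (l : ℕ) (hlr : l ≤ r)
    (pmin : ℝ) (hpmin : pmin = ⨅ i : Fin r, (p {i}).toReal) :
    (μ {ω | (Finset.image (fun s => X s ω) Finset.univ).card < l - 1}).toReal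
        ≤ (∑ i : Fin r, (1 - (p {i}).toReal) ^ t) / ((r : ℝ) - l + 2) ∧
      (μ {ω | (Finset.image (fun s => X s ω) Finset.univ).card < l - 1}).toReal
        ≤ r * (1 - pmin) ^ t / 2 := by
  subst hpmin
  simp only [← measureReal_def]
  set E := {ω | #(univ.image fun s => X s ω) < l - 1}
  set S := ∑ i : Fin r, (1 - p.real {i}) ^ t
  have hmissed_meas : ∀ i, MeasurableSet {ω | ∀ s, X s ω ∈ ({i}ᶜ : Set (Fin r))} := fun i => by
    rw [Set.ofPred_forall]
    exact .iInter fun s => hmeas s (measurableSet_singleton i).compl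
  have hmissed : ∀ i, μ.real {ω | ∀ s, X s ω ∈ ({i}ᶜ : Set (Fin r))} = (1 - p.real {i}) ^ t :=
    fun i => by
      rw [hindep.measureReal_forall_mem hmeas hlaw (measurableSet_singleton i).compl,
        probReal_compl_eq_one_sub (measurableSet_singleton i), Fintype.card_fin]
  have hmarkov : ((r - l + 2 : ℕ) : ℝ) * μ.real E ≤ S := by
    refine (mul_measureReal_le_sum_of_le_card_mem hmissed_meas fun ω hω => ?_).trans_eq
      (sum_congr rfl fun i _ => hmissed i)
    calc r - l + 2 ≤ r - #(univ.image fun s => X s ω) := by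
          simp only [E, Set.mem_ofPred_eq] at hω; omega
      -- the two filters differ only in their decidability instances
      _ = _ := by convert (card_filter_forall_ne fun s => X s ω).symm using 2 <;> simp
  have hk : ((r - l + 2 : ℕ) : ℝ) = r - l + 2 := by push_cast [Nat.cast_sub hlr]; ring
  have hk2 : (2 : ℝ) ≤ r - l + 2 := by linarith [(Nat.cast_le (α := ℝ)).2 hlr]
  have hfirst : μ.real E ≤ S / (r - l + 2) := by
    rwa [le_div_iff₀ (by linarith), mul_comm, ← hk]
  refine ⟨hfirst, hfirst.trans ?_⟩
  have hS_nonneg : 0 ≤ S := sum_nonneg fun i _ => pow_nonneg (sub_nonneg.2 measureReal_le_one) t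
  calc S / (r - l + 2) ≤ S / 2 := by gcongr
    _ ≤ r * (1 - ⨅ i, p.real {i}) ^ t / 2 := by
        gcongr
        simpa using sum_one_sub_pow_le_card_mul_one_sub_iInf_pow (fun i => p.real {i})
          (fun i => measureReal_le_one) t

/-- **Few-distinct-items probability bound.**  If `X₁, …, X_t` are i.i.d. draws from a
distribution `p` on `r` items with minimum probability `p_min`, and `2 ≤ l ≤ r`, then the
probability that fewer than `l − 1` distinct items appear is at most
`∑ᵢ (1 − pᵢ)^t / (r − l + 2)`, and hence at most `r·(1 − p_min)^t / 2`. -/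
theorem few_distinct_items_prob {r t : ℕ} (hr : 1 ≤ r) (ht : 1 ≤ t)
    {Ω : Type*} [MeasurableSpace Ω] (μ : Measure Ω) [IsProbabilityMeasure μ]
    (p : Measure (Fin r)) [IsProbabilityMeasure p]
    (X : Fin t → Ω → Fin r) (hmeas : ∀ s, Measurable (X s))
    (hindep : iIndepFun X μ)
    (hlaw : ∀ s, Measure.map (X s) μ = p)
    (l : ℕ) (hl2 : 2 ≤ l) (hlr : l ≤ r)
    (pmin : ℝ) (hpmin : pmin = ⨅ i : Fin r, (p {i}).toReal) :
    (μ {ω | (Finset.image (fun s => X s ω) Finset.univ).card < l - 1}).toReal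
        ≤ (∑ i : Fin r, (1 - (p {i}).toReal) ^ t) / ((r : ℝ) - l + 2) ∧
      (μ {ω | (Finset.image (fun s => X s ω) Finset.univ).card < l - 1}).toReal
        ≤ r * (1 - pmin) ^ t / 2 :=
  few_distinct_items_prob_general μ p X hmeas hindep hlaw l hlr pmin hpmin
end
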